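/- Let p and q be probability distributions on a finite set 𝒳 with supp(p) ⊆ supp(q), and suppose q has full support. If p_n → q pointwise, then D(p_n ∥ q) / χ²(p_n, q) → 1/(2 ln 2) as n → ∞ (provided χ²(p_n,q) ≠ 0 along the sequence). -/

import Mathlib

open scoped BigOperators Classical

/-- Kullback–Leibler divergence `D(p‖q)` (base-2 logarithm) on a finite alphabet. -/
noncomputable def klDiv {α : Type*} [Fintype α] (p q : α → ℝ) : ℝ :=
  ∑ x, p x * Real.logb 2 (p x / q x)

/-- First marginal of a joint pmf. -/
noncomputable def marg₁ {α β : Type*} [Fintype β] (q : α × β → ℝ) (x : α) : ℝ :=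
  ∑ y, q (x, y)

/-- Second marginal of a joint pmf. -/
noncomputable def marg₂ {α β : Type*} [Fintype α] (q : α × β → ℝ) (y : β) : ℝ :=
  ∑ x, q (x, y)

/-- Mutual information (base-2 logarithm) of a joint pmf on `α × β`. -/
noncomputable def miOfJoint {α β : Type*} [Fintype α] [Fintype β] (q : α × β → ℝ) : ℝ :=
  ∑ x, ∑ y, q (x, y) * Real.logb 2 (q (x, y) / (marg₁ q x * marg₂ q y))

/-- Chi-squared divergence `χ²(p,q)` on a finite alphabet. -/
noncomputable def chiSq {α : Type*} [Fintype α] (p q : α → ℝ) : ℝ :=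
  ∑ x, (p x - q x) ^ 2 / q x

/-- `p` is a probability mass function on the finite type `Ω`. -/
def IsPmf {Ω : Type*} [Fintype Ω] (p : Ω → ℝ) : Prop :=
  (∀ ω, 0 ≤ p ω) ∧ ∑ ω, p ω = 1

/-!
With `u = (p - q)/q`, each summand of the natural-log divergence is `q · (1+u) log (1+u)`, and
Taylor's theorem gives `(1+u) log (1+u) = u + u²/2 + O(|u|³)`. The linear terms cancel because `p`
and `q` have the same total mass, and the quadratic terms sum to `χ²/2`, so
`|D(p‖q) ln 2 - χ²/2| ≤ 4 (max |u|) χ²`; the relative deviation tends to `0` as `pₙ → q`.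
-/

open Real Filter Topology Finset

lemma abs_one_add_mul_log_one_add_sub_le {u : ℝ} (hu : |u| ≤ 1 / 2) :
    |(1 + u) * log (1 + u) - u - u ^ 2 / 2| ≤ 4 * |u| ^ 3 := by
  have htaylor : |log (1 + u) - (u - u ^ 2 / 2)| ≤ |u| ^ 3 / (1 - |u|) := by
    have h := abs_log_sub_add_sum_range_le (x := -u) (by rw [abs_neg]; linarith) 2
    simp only [sum_range_succ, sum_range_zero, abs_neg, sub_neg_eq_add] at h
    convert h using 2
    ring
  have hr : |log (1 + u) - (u - u ^ 2 / 2)| ≤ 2 * |u| ^ 3 := by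
    refine htaylor.trans ?_
    rw [div_le_iff₀ (by linarith)]
    nlinarith [pow_nonneg (abs_nonneg u) 3]
  have h1u : |1 + u| ≤ 3 / 2 := by
    rw [abs_le] at hu ⊢; constructor <;> linarith
  calc |(1 + u) * log (1 + u) - u - u ^ 2 / 2|
      = |(1 + u) * (log (1 + u) - (u - u ^ 2 / 2)) + -(u ^ 3 / 2)| := by ring_nf
    _ ≤ |1 + u| * |log (1 + u) - (u - u ^ 2 / 2)| + |u| ^ 3 / 2 := by
      refine (abs_add_le _ _).trans ?_
      rw [abs_mul, abs_neg, abs_div, abs_pow, abs_two]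
    _ ≤ 3 / 2 * (2 * |u| ^ 3) + |u| ^ 3 / 2 := by gcongr
    _ ≤ 4 * |u| ^ 3 := by nlinarith [pow_nonneg (abs_nonneg u) 3]

lemma abs_mul_log_div_sub_le {p q ε : ℝ} (hq : 0 < q) (hpq : |p - q| ≤ ε * q) (hε : ε ≤ 1 / 2) :
    |p * log (p / q) - (p - q) - (p - q) ^ 2 / (2 * q)| ≤ 4 * ε * ((p - q) ^ 2 / q) := by
  set u := (p - q) / q with hu_def
  have hu : |u| ≤ ε := by rwa [abs_div, abs_of_pos hq, div_le_iff₀ hq]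
  have hp : p = q * (1 + u) := by rw [hu_def]; field_simp; ring
  have hdev : p * log (p / q) - (p - q) - (p - q) ^ 2 / (2 * q)
      = q * ((1 + u) * log (1 + u) - u - u ^ 2 / 2) := by
    rw [hp, mul_div_cancel_left₀ _ hq.ne']; field_simp; ring
  have hsq : (p - q) ^ 2 / q = q * |u| ^ 2 := by rw [sq_abs, hp]; field_simp; ring
  rw [hdev, abs_mul, abs_of_pos hq, hsq]
  calc q * |(1 + u) * log (1 + u) - u - u ^ 2 / 2|
      ≤ q * (4 * |u| ^ 3) := by gcongr; exact abs_one_add_mul_log_one_add_sub_le (hu.trans hε)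
    _ = 4 * |u| * (q * |u| ^ 2) := by ring
    _ ≤ 4 * ε * (q * |u| ^ 2) := by gcongr

lemma klDiv_mul_log_two {α : Type*} [Fintype α] (p q : α → ℝ) :
    klDiv p q * log 2 = ∑ x, p x * log (p x / q x) := by
  rw [klDiv, sum_mul]
  refine sum_congr rfl fun x _ => ?_
  rw [logb, mul_assoc, div_mul_cancel₀ _ (log_pos one_lt_two).ne']

lemma chiSq_pos {α : Type*} [Fintype α] {p q : α → ℝ} (hq : ∀ x, 0 < q x) (h : chiSq p q ≠ 0) :
    0 < chiSq p q :=
  (sum_nonneg fun x _ => div_nonneg (sq_nonneg _) (hq x).le).lt_of_ne' h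

lemma abs_klDiv_mul_log_two_sub_chiSq_le {α : Type*} [Fintype α] {p q : α → ℝ} {ε : ℝ}
    (hq : ∀ x, 0 < q x) (hsum : ∑ x, p x = ∑ x, q x)
    (hpq : ∀ x, |p x - q x| ≤ ε * q x) (hε : ε ≤ 1 / 2) :
    |klDiv p q * log 2 - chiSq p q / 2| ≤ 4 * ε * chiSq p q := by
  have hdiff : ∑ x, (p x - q x) = 0 := by rw [sum_sub_distrib, hsum, sub_self]
  have hdev : klDiv p q * log 2 - chiSq p q / 2
      = ∑ x, (p x * log (p x / q x) - (p x - q x) - (p x - q x) ^ 2 / (2 * q x)) := by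
    simp only [sum_sub_distrib, hdiff, klDiv_mul_log_two, chiSq, sum_div, div_div, mul_comm (q _)]
    ring
  rw [hdev, chiSq, mul_sum]
  exact (abs_sum_le_sum_abs _ _).trans
    (sum_le_sum fun x _ => abs_mul_log_div_sub_le (hq x) (hpq x) hε)

lemma abs_klDiv_mul_log_two_div_chiSq_sub_half_le {α : Type*} [Fintype α] {p q : α → ℝ}
    {ε : ℝ} (hq : ∀ x, 0 < q x) (hsum : ∑ x, p x = ∑ x, q x) (hchi : chiSq p q ≠ 0)
    (hpq : ∀ x, |p x - q x| ≤ ε * q x) (hε : ε ≤ 1 / 2) :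
    |klDiv p q * log 2 / chiSq p q - 1 / 2| ≤ 4 * ε := by
  have hpos := chiSq_pos hq hchi
  have hdiv : klDiv p q * log 2 / chiSq p q - 1 / 2
      = (klDiv p q * log 2 - chiSq p q / 2) / chiSq p q := by field_simp
  rw [hdiv, abs_div, abs_of_pos hpos, div_le_iff₀ hpos]
  exact abs_klDiv_mul_log_two_sub_chiSq_le hq hsum hpq hε

/-- Asymptotic equivalence of KL and chi-squared divergences: if `pₙ → q` pointwise,
with `q` of full support, then `D(pₙ‖q)/χ²(pₙ,q) → 1/(2 ln 2)`. -/
theorem klDiv_div_chiSq_tendsto {α : Type*} [Fintype α]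
    (q : α → ℝ) (hq : IsPmf q) (hqpos : ∀ x, 0 < q x)
    (p : ℕ → α → ℝ) (hp : ∀ n, IsPmf (p n))
    (hconv : ∀ x, Filter.Tendsto (fun n => p n x) Filter.atTop (nhds (q x)))
    (hchi : ∀ n, chiSq (p n) q ≠ 0) :
    Filter.Tendsto (fun n => klDiv (p n) q / chiSq (p n) q) Filter.atTop
      (nhds (1 / (2 * Real.log 2))) := by
  set ε : ℕ → ℝ := fun n => ∑ x, |p n x - q x| / q x
  have hε : Tendsto ε atTop (𝓝 0) := by
    simpa using tendsto_finsetSum univ fun x _ =>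
      (((hconv x).sub_const (q x)).abs).div_const (q x)
  have hdev : ∀ n x, |p n x - q x| ≤ ε n * q x := fun n x => by
    rw [← div_le_iff₀ (hqpos x)]
    exact single_le_sum (f := fun y => |p n y - q y| / q y)
      (fun y _ => div_nonneg (abs_nonneg _) (hqpos y).le) (mem_univ x)
  have hbound : ∀ᶠ n in atTop, |klDiv (p n) q * log 2 / chiSq (p n) q - 1 / 2| ≤ 4 * ε n := by
    filter_upwards [hε.eventually (ge_mem_nhds one_half_pos)] with n hn
    exact abs_klDiv_mul_log_two_div_chiSq_sub_half_le hqpos ((hp n).2.trans hq.2.symm)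
      (hchi n) (hdev n) hn
  have hhalf : Tendsto (fun n => klDiv (p n) q * log 2 / chiSq (p n) q) atTop (𝓝 (1 / 2)) :=
    tendsto_sub_nhds_zero_iff.mp <| squeeze_zero_norm' hbound (by simpa using hε.const_mul 4)
  convert hhalf.div_const (log 2) using 1
  · ext n; field_simp [(log_pos one_lt_two).ne']
  · rw [div_div]
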